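/- arXiv:0904.2958 — 2 statements merged into one kernel-verified Lean document; each statement's English description precedes it below -/
import Mathlib

section
/- For the crossing pair partition π₃ = {{1,3},{2,4}} of {1,2,3,4}, the integral p_{π₃}(b) = ∫_{[0,1]×[−1,1]²} I_{[0,1]}(x_0+bx_1) I_{[0,1]}(x_0+bx_1+bx_2) I_{[0,1]}(x_0+bx_2) dx_0 dx_1 dx_2 equals 4(1−b) for b ∈ [0,1/2] and 2(−1+6b−6b²+2b³)/(3b²) for b ∈ (1/2,1]. -/
open MeasureTheory

/-- Indicator function of `[0,1]`. -/
noncomputable def ind01 (t : ℝ) : ℝ := Set.indicator (Set.Icc (0 : ℝ) 1) 1 t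

lemma ind01_def (t : ℝ) : ind01 t = if 0 ≤ t ∧ t ≤ 1 then 1 else 0 := by
  simp [ind01, Set.indicator_apply, Set.mem_Icc]

lemma measurable_ind01 : Measurable ind01 := measurable_one.indicator measurableSet_Icc

lemma ind01_nonneg (t : ℝ) : 0 ≤ ind01 t := by rw [ind01_def]; split_ifs <;> norm_num

lemma ind01_le_one (t : ℝ) : ind01 t ≤ 1 := by rw [ind01_def]; split_ifs <;> norm_num

set_option maxHeartbeats 2000000 in
-- step 2: x-integral
lemma xint (b : ℝ) (y z : ℝ) :
    ∫ x in Set.Icc (0:ℝ) 1, ind01 (x + b * y) * ind01 (x + b * y + b * z) * ind01 (x + b * z)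
      = max (1 - |b * y| - |b * z|) 0 := by
  set U := b * y with hU
  set V := b * z with hV
  set l := max (-U) (max (-U - V) (-V)) with hl
  set u := min (1 - U) (min (1 - U - V) (1 - V)) with hu
  have h1 : ∀ x : ℝ, ind01 (x + U) * ind01 (x + U + V) * ind01 (x + V)
      = Set.indicator (Set.Icc l u) (fun _ => (1:ℝ)) x := by
    intro x
    rw [ind01_def, ind01_def, ind01_def]
    by_cases hx : x ∈ Set.Icc l u
    · rw [Set.indicator_of_mem hx]
      simp only [Set.mem_Icc, hl, hu, max_le_iff, le_min_iff] at hx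
      obtain ⟨⟨a1, a2, a3⟩, a4, a5, a6⟩ := hx
      rw [if_pos ⟨by linarith, by linarith⟩, if_pos ⟨by linarith, by linarith⟩,
        if_pos ⟨by linarith, by linarith⟩]
      norm_num
    · rw [Set.indicator_of_notMem hx]
      simp only [Set.mem_Icc] at hx
      rcases not_and_or.mp hx with h | h
      · push_neg at h
        rw [hl] at h
        rcases lt_max_iff.mp h with h | h
        · rw [if_neg (by intro hc; linarith [hc.1]), zero_mul, zero_mul]
        rcases lt_max_iff.mp h with h | h
        · rw [if_neg (show ¬(0 ≤ x + U + V ∧ x + U + V ≤ 1) from fun hc => by linarith [hc.1]),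
            mul_zero, zero_mul]
        · rw [if_neg (show ¬(0 ≤ x + V ∧ x + V ≤ 1) from fun hc => by linarith [hc.1]), mul_zero]
      · push_neg at h
        rw [hu] at h
        rcases min_lt_iff.mp h with h | h
        · rw [if_neg (fun hc => by linarith [hc.2]), zero_mul, zero_mul]
        rcases min_lt_iff.mp h with h | h
        · rw [if_neg (show ¬(0 ≤ x + U + V ∧ x + U + V ≤ 1) from fun hc => by linarith [hc.2]),
            mul_zero, zero_mul]
        · rw [if_neg (show ¬(0 ≤ x + V ∧ x + V ≤ 1) from fun hc => by linarith [hc.2]), mul_zero]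
  simp only [h1]
  rw [setIntegral_indicator measurableSet_Icc]
  simp only [Set.Icc_inter_Icc]
  rw [setIntegral_const, Real.volume_real_Icc, smul_eq_mul, mul_one]
  have key : ((1:ℝ) ⊓ u) - ((0:ℝ) ⊔ l) = 1 - |U| - |V| := by
    rw [hl, hu]
    rcases le_total 0 U with hU0 | hU0 <;> rcases le_total 0 V with hV0 | hV0 <;>
      [rw [abs_of_nonneg hU0, abs_of_nonneg hV0];
       rw [abs_of_nonneg hU0, abs_of_nonpos hV0];
       rw [abs_of_nonpos hU0, abs_of_nonneg hV0];
       rw [abs_of_nonpos hU0, abs_of_nonpos hV0]] <;>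
      (simp only [min_def, max_def]; split_ifs <;> linarith)
  rw [key]

-- polynomial integrals
lemma quad_int (A B C a c : ℝ) :
    ∫ z in a..c, (A + B * z + C * z ^ 2) =
      A * (c - a) + B * (c ^ 2 - a ^ 2) / 2 + C * (c ^ 3 - a ^ 3) / 3 := by
  have h1 : IntervalIntegrable (fun z : ℝ => A + B * z) volume a c :=
    (continuous_const.add (continuous_const.mul continuous_id)).intervalIntegrable _ _
  have h2 : IntervalIntegrable (fun z : ℝ => C * z ^ 2) volume a c :=
    (continuous_const.mul (continuous_pow 2)).intervalIntegrable _ _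
  have h3 : IntervalIntegrable (fun z : ℝ => (A : ℝ)) volume a c :=
    intervalIntegrable_const
  have h4 : IntervalIntegrable (fun z : ℝ => B * z) volume a c :=
    (continuous_const.mul continuous_id).intervalIntegrable _ _
  rw [intervalIntegral.integral_add h1 h2, intervalIntegral.integral_add h3 h4,
    intervalIntegral.integral_const, intervalIntegral.integral_const_mul,
    intervalIntegral.integral_const_mul, integral_id, integral_pow]
  push_cast
  simp only [smul_eq_mul]
  ring

lemma lin_int (A B a c : ℝ) :
    ∫ z in a..c, (A + B * z) = A * (c - a) + B * (c ^ 2 - a ^ 2) / 2 := by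
  have h := quad_int A B 0 a c
  rw [show A * (c - a) + B * (c ^ 2 - a ^ 2) / 2 + 0 * (c ^ 3 - a ^ 3) / 3
      = A * (c - a) + B * (c ^ 2 - a ^ 2) / 2 by ring] at h
  rw [← h]
  congr 1 with z
  ring

-- even function reduction on [-1,1]
lemma even_int (g : ℝ → ℝ) (hg : Continuous g) (he : ∀ y, g (-y) = g y) :
    ∫ y in Set.Icc (-1:ℝ) 1, g y = 2 * ∫ y in (0:ℝ)..1, g y := by
  rw [integral_Icc_eq_integral_Ioc, ← intervalIntegral.integral_of_le (by norm_num : (-1:ℝ) ≤ 1)]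
  rw [← intervalIntegral.integral_add_adjacent_intervals
    (hg.intervalIntegrable (-1) 0) (hg.intervalIntegrable 0 1)]
  have h := intervalIntegral.integral_comp_neg (a := (0:ℝ)) (b := 1) g
  simp only [neg_zero, he] at h
  rw [h]
  ring

-- inner z integral reduction
lemma Izero (b c : ℝ) (hb : 0 ≤ b) :
    ∫ z in Set.Icc (-1:ℝ) 1, max (1 - c - |b * z|) 0
      = 2 * ∫ z in (0:ℝ)..1, max (1 - c - b * z) 0 := by
  have hcont : Continuous fun z : ℝ => max (1 - c - |b * z|) 0 := by
    apply Continuous.max _ continuous_const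
    exact continuous_const.sub (continuous_const.mul continuous_id).abs
  rw [even_int _ hcont (fun y => by rw [mul_neg, abs_neg])]
  congr 1
  apply intervalIntegral.integral_congr
  intro z hz
  rw [Set.uIcc_of_le (by norm_num : (0:ℝ) ≤ 1), Set.mem_Icc] at hz
  show max (1 - c - |b * z|) 0 = max (1 - c - b * z) 0
  rw [abs_of_nonneg (mul_nonneg hb hz.1)]

lemma JA (b c : ℝ) (hb : 0 ≤ b) (hbc : b + c ≤ 1) :
    ∫ z in (0:ℝ)..1, max (1 - c - b * z) 0 = 1 - c - b / 2 := by
  have : ∫ z in (0:ℝ)..1, max (1 - c - b * z) 0 = ∫ z in (0:ℝ)..1, ((1 - c) + (-b) * z) := by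
    apply intervalIntegral.integral_congr
    intro z hz
    rw [Set.uIcc_of_le (by norm_num : (0:ℝ) ≤ 1), Set.mem_Icc] at hz
    have h2 : b * z ≤ b := by nlinarith [hz.2]
    show max (1 - c - b * z) 0 = (1 - c) + (-b) * z
    rw [max_eq_left (by nlinarith)]
    ring
  rw [this, lin_int]
  ring

lemma JB (b c : ℝ) (hb : 0 < b) (hc1 : c ≤ 1) (hbc : 1 ≤ b + c) :
    ∫ z in (0:ℝ)..1, max (1 - c - b * z) 0 = (1 - c) ^ 2 / (2 * b) := by
  set t := (1 - c) / b with ht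
  have ht0 : 0 ≤ t := div_nonneg (by linarith) hb.le
  have ht1 : t ≤ 1 := by rw [div_le_one hb]; linarith
  have htb : b * t = 1 - c := by rw [ht]; field_simp
  have hcont : Continuous fun z : ℝ => max (1 - c - b * z) 0 :=
    Continuous.max (continuous_const.sub (continuous_const.mul continuous_id)) continuous_const
  rw [← intervalIntegral.integral_add_adjacent_intervals
    (hcont.intervalIntegrable 0 t) (hcont.intervalIntegrable t 1)]
  have e1 : ∫ z in (0:ℝ)..t, max (1 - c - b * z) 0 = ∫ z in (0:ℝ)..t, ((1 - c) + (-b) * z) := by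
    apply intervalIntegral.integral_congr
    intro z hz
    rw [Set.uIcc_of_le ht0, Set.mem_Icc] at hz
    have h2 : b * z ≤ b * t := by nlinarith [hz.2]
    show max (1 - c - b * z) 0 = (1 - c) + (-b) * z
    rw [max_eq_left (by nlinarith [htb])]
    ring
  have e2 : ∫ z in t..1, max (1 - c - b * z) 0 = ∫ z in t..1, (0:ℝ) := by
    apply intervalIntegral.integral_congr
    intro z hz
    rw [Set.uIcc_of_le ht1, Set.mem_Icc] at hz
    have h2 : b * t ≤ b * z := by nlinarith [hz.1]
    show max (1 - c - b * z) 0 = 0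
    rw [max_eq_right (by nlinarith [htb])]
  rw [e1, e2, lin_int, intervalIntegral.integral_zero, ht]
  field_simp
  ring

lemma f3_norm_le (b x y z : ℝ) :
    ‖ind01 (x + b * y) * ind01 (x + b * y + b * z) * ind01 (x + b * z)‖ ≤ 1 := by
  have h0 : (0:ℝ) ≤ ind01 (x + b * y) * ind01 (x + b * y + b * z) * ind01 (x + b * z) :=
    mul_nonneg (mul_nonneg (ind01_nonneg _) (ind01_nonneg _)) (ind01_nonneg _)
  rw [Real.norm_eq_abs, abs_of_nonneg h0]
  calc ind01 (x + b * y) * ind01 (x + b * y + b * z) * ind01 (x + b * z)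
      ≤ 1 * 1 * 1 := by
        gcongr <;> first | exact ind01_nonneg _ | exact ind01_le_one _
    _ = 1 := by norm_num

lemma reduce (b : ℝ) (hb : 0 ≤ b) :
    (∫ x in Set.Icc (0:ℝ) 1, ∫ y in Set.Icc (-1:ℝ) 1, ∫ z in Set.Icc (-1:ℝ) 1,
      ind01 (x + b * y) * ind01 (x + b * y + b * z) * ind01 (x + b * z))
    = ∫ y in Set.Icc (-1:ℝ) 1, 2 * ∫ z in (0:ℝ)..1, max (1 - |b * y| - b * z) 0 := by
  haveI hμ : IsFiniteMeasure (volume.restrict (Set.Icc (0:ℝ) 1)) :=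
    ⟨by rw [Measure.restrict_apply_univ]; exact isCompact_Icc.measure_lt_top⟩
  haveI hν : IsFiniteMeasure (volume.restrict (Set.Icc (-1:ℝ) 1)) :=
    ⟨by rw [Measure.restrict_apply_univ]; exact isCompact_Icc.measure_lt_top⟩
  have hνuniv : (volume.restrict (Set.Icc (-1:ℝ) 1)) Set.univ = ENNReal.ofReal 2 := by
    rw [Measure.restrict_apply_univ, Real.volume_Icc]; norm_num
  have hFm : Measurable fun p : (ℝ × ℝ) × ℝ =>
      ind01 (p.1.1 + b * p.1.2) * ind01 (p.1.1 + b * p.1.2 + b * p.2) *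
        ind01 (p.1.1 + b * p.2) := by
    refine Measurable.mul (Measurable.mul ?_ ?_) ?_ <;>
      exact measurable_ind01.comp (by fun_prop)
  -- swap 1
  have key1 : (∫ x in Set.Icc (0:ℝ) 1, ∫ y in Set.Icc (-1:ℝ) 1, ∫ z in Set.Icc (-1:ℝ) 1,
        ind01 (x + b * y) * ind01 (x + b * y + b * z) * ind01 (x + b * z))
      = ∫ y in Set.Icc (-1:ℝ) 1, ∫ x in Set.Icc (0:ℝ) 1, ∫ z in Set.Icc (-1:ℝ) 1,
        ind01 (x + b * y) * ind01 (x + b * y + b * z) * ind01 (x + b * z) := by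
    apply MeasureTheory.integral_integral_swap
    have hsm : StronglyMeasurable fun p : ℝ × ℝ =>
        ∫ z in Set.Icc (-1:ℝ) 1,
          ind01 (p.1 + b * p.2) * ind01 (p.1 + b * p.2 + b * z) * ind01 (p.1 + b * z) :=
      hFm.stronglyMeasurable.integral_prod_right'
    apply Integrable.mono' (integrable_const (2:ℝ)) hsm.aestronglyMeasurable
    refine Filter.Eventually.of_forall fun p => ?_
    calc ‖∫ z in Set.Icc (-1:ℝ) 1,
          ind01 (p.1 + b * p.2) * ind01 (p.1 + b * p.2 + b * z) * ind01 (p.1 + b * z)‖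
        ≤ 1 * ((volume.restrict (Set.Icc (-1:ℝ) 1)) Set.univ).toReal :=
          norm_integral_le_of_norm_le_const
            (Filter.Eventually.of_forall fun z => f3_norm_le b p.1 p.2 z)
      _ ≤ 2 := by rw [hνuniv, ENNReal.toReal_ofReal (by norm_num)]; norm_num
  rw [key1]
  -- swap 2 (pointwise in y)
  have key2 : ∀ y : ℝ, (∫ x in Set.Icc (0:ℝ) 1, ∫ z in Set.Icc (-1:ℝ) 1,
        ind01 (x + b * y) * ind01 (x + b * y + b * z) * ind01 (x + b * z))
      = ∫ z in Set.Icc (-1:ℝ) 1, ∫ x in Set.Icc (0:ℝ) 1,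
        ind01 (x + b * y) * ind01 (x + b * y + b * z) * ind01 (x + b * z) := by
    intro y
    apply MeasureTheory.integral_integral_swap
    have hm : Measurable fun p : ℝ × ℝ =>
        ind01 (p.1 + b * y) * ind01 (p.1 + b * y + b * p.2) * ind01 (p.1 + b * p.2) := by
      refine Measurable.mul (Measurable.mul ?_ ?_) ?_ <;>
        exact measurable_ind01.comp (by fun_prop)
    apply Integrable.mono' (integrable_const (1:ℝ)) hm.aestronglyMeasurable
    exact Filter.Eventually.of_forall fun p => f3_norm_le b p.1 y p.2
  simp_rw [key2, xint b]
  have key3 : ∀ y : ℝ, (∫ z in Set.Icc (-1:ℝ) 1, max (1 - |b * y| - |b * z|) 0)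
      = 2 * ∫ z in (0:ℝ)..1, max (1 - |b * y| - b * z) 0 := fun y => Izero b |b * y| hb
  simp_rw [key3]

/-- For the crossing pair partition `π₃ = {{1,3},{2,4}}`, the integral
`p_{π₃}(b) = ∫_{[0,1]×[-1,1]²} I_{[0,1]}(x₀+bx₁) I_{[0,1]}(x₀+bx₁+bx₂) I_{[0,1]}(x₀+bx₂)`
equals `4(1-b)` for `b ∈ [0,1/2]` and `2(-1+6b-6b²+2b³)/(3b²)` for `b ∈ (1/2,1]`. -/
theorem p_pi3_eval (b : ℝ) :
    (b ∈ Set.Icc (0 : ℝ) (1 / 2) →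
      (∫ x in Set.Icc (0 : ℝ) 1, ∫ y in Set.Icc (-1 : ℝ) 1, ∫ z in Set.Icc (-1 : ℝ) 1,
        ind01 (x + b * y) * ind01 (x + b * y + b * z) * ind01 (x + b * z))
        = 4 * (1 - b)) ∧
    (b ∈ Set.Ioc (1 / 2 : ℝ) 1 →
      (∫ x in Set.Icc (0 : ℝ) 1, ∫ y in Set.Icc (-1 : ℝ) 1, ∫ z in Set.Icc (-1 : ℝ) 1,
        ind01 (x + b * y) * ind01 (x + b * y + b * z) * ind01 (x + b * z))
        = 2 * (-1 + 6 * b - 6 * b ^ 2 + 2 * b ^ 3) / (3 * b ^ 2)) := by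
  constructor
  · rintro ⟨hb0, hb2⟩
    rw [reduce b hb0]
    have h1 : Set.EqOn (fun y => 2 * ∫ z in (0:ℝ)..1, max (1 - |b * y| - b * z) 0)
        (fun y => 2 * (1 - |b * y| - b / 2)) (Set.Icc (-1:ℝ) 1) := by
      intro y hy
      rw [Set.mem_Icc] at hy
      have habs : |b * y| ≤ b := by
        rw [abs_mul, abs_of_nonneg hb0]
        calc b * |y| ≤ b * 1 := by gcongr; rw [abs_le]; exact ⟨hy.1, hy.2⟩
          _ = b := mul_one b
      show 2 * ∫ z in (0:ℝ)..1, max (1 - |b * y| - b * z) 0 = 2 * (1 - |b * y| - b / 2)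
      rw [JA b |b * y| hb0 (by linarith)]
    rw [setIntegral_congr_fun measurableSet_Icc h1]
    have hcont : Continuous fun y : ℝ => 2 * (1 - |b * y| - b / 2) :=
      continuous_const.mul ((continuous_const.sub
        (continuous_const.mul continuous_id).abs).sub continuous_const)
    rw [even_int _ hcont (fun y => by rw [mul_neg, abs_neg])]
    have h2 : ∫ y in (0:ℝ)..1, 2 * (1 - |b * y| - b / 2)
        = ∫ y in (0:ℝ)..1, ((2 - b) + (-2 * b) * y) := by
      apply intervalIntegral.integral_congr
      intro y hy
      rw [Set.uIcc_of_le (by norm_num : (0:ℝ) ≤ 1), Set.mem_Icc] at hy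
      show 2 * (1 - |b * y| - b / 2) = (2 - b) + (-2 * b) * y
      rw [abs_of_nonneg (mul_nonneg hb0 hy.1)]
      ring
    rw [h2, lin_int]
    ring
  · rintro ⟨hb2, hb1⟩
    have hb0 : (0:ℝ) < b := by linarith
    rw [reduce b hb0.le]
    have h1 : Set.EqOn (fun y => 2 * ∫ z in (0:ℝ)..1, max (1 - |b * y| - b * z) 0)
        (fun y => 2 * (if b + |b * y| ≤ 1 then 1 - |b * y| - b / 2
          else (1 - |b * y|) ^ 2 / (2 * b))) (Set.Icc (-1:ℝ) 1) := by
      intro y hy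
      rw [Set.mem_Icc] at hy
      have habs : |b * y| ≤ b := by
        rw [abs_mul, abs_of_nonneg hb0.le]
        calc b * |y| ≤ b * 1 := by gcongr; rw [abs_le]; exact ⟨hy.1, hy.2⟩
          _ = b := mul_one b
      show 2 * ∫ z in (0:ℝ)..1, max (1 - |b * y| - b * z) 0
          = 2 * (if b + |b * y| ≤ 1 then 1 - |b * y| - b / 2 else (1 - |b * y|) ^ 2 / (2 * b))
      by_cases hcase : b + |b * y| ≤ 1
      · rw [if_pos hcase, JA b |b * y| hb0.le hcase]
      · rw [if_neg hcase, JB b |b * y| hb0 (by linarith) (le_of_not_ge hcase)]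
    rw [setIntegral_congr_fun measurableSet_Icc h1]
    have hcont : Continuous fun y : ℝ => 2 * (if b + |b * y| ≤ 1 then 1 - |b * y| - b / 2
        else (1 - |b * y|) ^ 2 / (2 * b)) := by
      apply continuous_const.mul
      apply Continuous.if_le
      · exact (continuous_const.sub (continuous_const.mul continuous_id).abs).sub continuous_const
      · exact ((continuous_const.sub (continuous_const.mul continuous_id).abs).pow 2).div_const _
      · exact continuous_const.add (continuous_const.mul continuous_id).abs
      · exact continuous_const
      · intro y hy
        have : |b * y| = 1 - b := by linarith
        rw [this]
        field_simp
        ring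
    rw [even_int _ hcont (fun y => by rw [mul_neg, abs_neg])]
    set t := (1 - b) / b with ht
    have ht0 : 0 ≤ t := div_nonneg (by linarith) hb0.le
    have ht1 : t ≤ 1 := by rw [div_le_one hb0]; linarith
    have htb : b * t = 1 - b := by rw [ht]; field_simp
    have h2 : ∫ y in (0:ℝ)..1, 2 * (if b + |b * y| ≤ 1 then 1 - |b * y| - b / 2
          else (1 - |b * y|) ^ 2 / (2 * b))
        = ∫ y in (0:ℝ)..1, 2 * (if b + b * y ≤ 1 then 1 - b * y - b / 2
          else (1 - b * y) ^ 2 / (2 * b)) := by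
      apply intervalIntegral.integral_congr
      intro y hy
      rw [Set.uIcc_of_le (by norm_num : (0:ℝ) ≤ 1), Set.mem_Icc] at hy
      show 2 * (if b + |b * y| ≤ 1 then 1 - |b * y| - b / 2 else (1 - |b * y|) ^ 2 / (2 * b))
          = 2 * (if b + b * y ≤ 1 then 1 - b * y - b / 2 else (1 - b * y) ^ 2 / (2 * b))
      rw [abs_of_nonneg (mul_nonneg hb0.le hy.1)]
    rw [h2]
    have hcont2 : Continuous fun y : ℝ => 2 * (if b + b * y ≤ 1 then 1 - b * y - b / 2
        else (1 - b * y) ^ 2 / (2 * b)) := by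
      apply continuous_const.mul
      apply Continuous.if_le
      · exact (continuous_const.sub (continuous_const.mul continuous_id)).sub continuous_const
      · exact ((continuous_const.sub (continuous_const.mul continuous_id)).pow 2).div_const _
      · exact continuous_const.add (continuous_const.mul continuous_id)
      · exact continuous_const
      · intro y hy
        have hby : b * y = 1 - b := by linarith
        rw [hby]
        field_simp
        ring
    rw [← intervalIntegral.integral_add_adjacent_intervals
      (hcont2.intervalIntegrable 0 t) (hcont2.intervalIntegrable t 1)]
    have e1 : ∫ y in (0:ℝ)..t, 2 * (if b + b * y ≤ 1 then 1 - b * y - b / 2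
          else (1 - b * y) ^ 2 / (2 * b))
        = ∫ y in (0:ℝ)..t, ((2 - b) + (-2 * b) * y) := by
      apply intervalIntegral.integral_congr
      intro y hy
      rw [Set.uIcc_of_le ht0, Set.mem_Icc] at hy
      have hle : b * y ≤ 1 - b := by nlinarith [hy.2, htb]
      show 2 * (if b + b * y ≤ 1 then 1 - b * y - b / 2
          else (1 - b * y) ^ 2 / (2 * b)) = (2 - b) + (-2 * b) * y
      rw [if_pos (by linarith)]
      ring
    have e2 : ∫ y in t..1, 2 * (if b + b * y ≤ 1 then 1 - b * y - b / 2
          else (1 - b * y) ^ 2 / (2 * b))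
        = ∫ y in t..1, (1 / b + (-2) * y + b * y ^ 2) := by
      apply intervalIntegral.integral_congr
      intro y hy
      rw [Set.uIcc_of_le ht1, Set.mem_Icc] at hy
      have hge : 1 - b ≤ b * y := by nlinarith [hy.1, htb]
      show 2 * (if b + b * y ≤ 1 then 1 - b * y - b / 2
          else (1 - b * y) ^ 2 / (2 * b)) = 1 / b + (-2) * y + b * y ^ 2
      by_cases hcase : b + b * y ≤ 1
      · rw [if_pos hcase]
        have hby : b * y = 1 - b := le_antisymm (by linarith) hge
        have hyt : y = (1 - b) / b := by
          field_simp at hby ⊢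
          linarith [hby]
        rw [hyt]
        field_simp
        ring
      · rw [if_neg hcase]
        field_simp
        ring
    rw [e1, e2, lin_int, quad_int, ht]
    have hb' : b ≠ 0 := ne_of_gt hb0
    field_simp
    ring
end

section
/- For the pair partition π₂ = {{1,4},{2,3}} of {1,2,3,4}, the integral p_{π₂}(b) = ∫_{[0,1]×[−1,1]²} I_{[0,1]}(x_0+bx_1) I_{[0,1]}(x_0+bx_1+bx_2) I_{[0,1]}(x_0+bx_1) dx_0 dx_1 dx_2 equals p_{π₁}(b), namely (2/3)(6−5b) for b ∈ [0,1/2] and (−1+6b−2b³)/(3b²) for b ∈ (1/2,1]. -/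
open MeasureTheory

set_option maxHeartbeats 1000000

lemma ind01_of_mem {t : ℝ} (h : t ∈ Set.Icc (0:ℝ) 1) : ind01 t = 1 := by
  simp [ind01, Set.indicator_of_mem h]

lemma ind01_of_not_mem {t : ℝ} (h : t ∉ Set.Icc (0:ℝ) 1) : ind01 t = 0 := by
  simp [ind01, Set.indicator_of_notMem h]

noncomputable def gfun (b u : ℝ) : ℝ := min 1 ((1-u)/b) + min 1 (u/b)

noncomputable def Ffun (b u : ℝ) : ℝ := ind01 u * gfun b u

lemma gfun_cont (b : ℝ) : Continuous (gfun b) := by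
  unfold gfun; fun_prop

lemma Ffun_eq_indicator (b : ℝ) : Ffun b = Set.indicator (Set.Icc (0:ℝ) 1) (gfun b) := by
  funext u
  by_cases h : u ∈ Set.Icc (0:ℝ) 1
  · simp [Ffun, ind01_of_mem h, Set.indicator_of_mem h]
  · simp [Ffun, ind01_of_not_mem h, Set.indicator_of_notMem h]

lemma Ffun_intIntegrable (b a c : ℝ) : IntervalIntegrable (Ffun b) volume a c := by
  rw [Ffun_eq_indicator]
  exact (((gfun_cont b).continuousOn.integrableOn_compact isCompact_Icc).integrable_indicator
    measurableSet_Icc).intervalIntegrable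

-- Lemma A
lemma innerA {b : ℝ} (hb : 0 < b) (c : ℝ) :
    (∫ z in Set.Icc (-1:ℝ) 1, ind01 c * ind01 (c + b*z) * ind01 c) = Ffun b c := by
  by_cases hc : c ∈ Set.Icc (0:ℝ) 1
  · have h1 : ind01 c = 1 := ind01_of_mem hc
    rw [Ffun_eq_indicator]
    simp only [h1, one_mul, mul_one, Set.indicator_of_mem hc]
    have key : ∀ z : ℝ, ind01 (c + b*z)
        = Set.indicator (Set.Icc (-(c/b)) ((1-c)/b)) (1 : ℝ → ℝ) z := by
      intro z
      have hiff : (c + b*z) ∈ Set.Icc (0:ℝ) 1 ↔ z ∈ Set.Icc (-(c/b)) ((1-c)/b) := by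
        simp only [Set.mem_Icc, ← neg_div, neg_le, div_le_iff₀ hb, le_div_iff₀ hb,
          neg_le_iff_add_nonneg]
        constructor <;> rintro ⟨u1, u2⟩ <;> constructor <;> nlinarith
      unfold ind01
      by_cases hz : z ∈ Set.Icc (-(c/b)) ((1-c)/b)
      · rw [Set.indicator_of_mem hz, Set.indicator_of_mem (hiff.mpr hz)]; rfl
      · rw [Set.indicator_of_notMem hz, Set.indicator_of_notMem (fun h => hz (hiff.mp h))]
    calc (∫ z in Set.Icc (-1:ℝ) 1, ind01 (c + b*z))
        = ∫ z in Set.Icc (-1:ℝ) 1, Set.indicator (Set.Icc (-(c/b)) ((1-c)/b)) (1:ℝ→ℝ) z := by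
          exact setIntegral_congr_fun measurableSet_Icc (fun z _ => key z)
      _ = ∫ z in Set.Icc (-1:ℝ) 1 ∩ Set.Icc (-(c/b)) ((1-c)/b), (1:ℝ) :=
          setIntegral_indicator measurableSet_Icc
      _ = gfun b c := by
          rw [Set.Icc_inter_Icc, setIntegral_const]
          have hcb : (0:ℝ) ≤ c / b := div_nonneg hc.1 hb.le
          have hcb' : (0:ℝ) ≤ (1 - c) / b := div_nonneg (by linarith [hc.2]) hb.le
          have hle : max (-1:ℝ) (-(c/b)) ≤ min 1 ((1-c)/b) := by
            apply le_trans (max_le (by norm_num) (by linarith)) (le_min (by norm_num) hcb')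
          rw [Real.volume_real_Icc_of_le hle]
          have : -(max (-1:ℝ) (-(c/b))) = min 1 (c/b) := by
            rw [← min_neg_neg]; norm_num
          unfold gfun
          rw [smul_eq_mul, mul_one, sub_eq_add_neg, this]
  · have h1 : ind01 c = 0 := ind01_of_not_mem hc
    rw [Ffun_eq_indicator]
    simp [h1, Set.indicator_of_notMem hc]

noncomputable def Phi (b v : ℝ) : ℝ := ∫ u in (0:ℝ)..v, Ffun b u

lemma Phi_cont (b : ℝ) : Continuous (Phi b) :=
  intervalIntegral.continuous_primitive (fun a c => Ffun_intIntegrable b a c) 0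

-- Lemma B
lemma middleB {b : ℝ} (hb : 0 < b) (x : ℝ) :
    (∫ y in Set.Icc (-1:ℝ) 1, Ffun b (x + b*y)) = b⁻¹ * (Phi b (x+b) - Phi b (x-b)) := by
  rw [integral_Icc_eq_integral_Ioc, ← intervalIntegral.integral_of_le (by norm_num : (-1:ℝ) ≤ 1)]
  have h1 : (∫ y in (-1:ℝ)..1, Ffun b (x + b*y)) = ∫ y in (-1:ℝ)..1, Ffun b (b*y + x) := by
    apply intervalIntegral.integral_congr; intro y _; dsimp only; rw [add_comm]
  rw [h1, intervalIntegral.integral_comp_mul_add (Ffun b) hb.ne' x]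
  have h2 : b * (-1) + x = x - b := by ring
  have h3 : b * 1 + x = x + b := by ring
  rw [h2, h3, smul_eq_mul]
  congr 1
  rw [← intervalIntegral.integral_interval_sub_left (Ffun_intIntegrable b 0 (x+b))
    (Ffun_intIntegrable b 0 (x-b))]
  rfl

-- outer assembly
lemma outerC {b : ℝ} (hb : 0 < b) :
    (∫ x in Set.Icc (0:ℝ) 1, b⁻¹ * (Phi b (x+b) - Phi b (x-b)))
      = b⁻¹ * ((∫ v in b..(1+b:ℝ), Phi b v) - (∫ v in (-b)..(1-b:ℝ), Phi b v)) := by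
  rw [integral_Icc_eq_integral_Ioc, ← intervalIntegral.integral_of_le (by norm_num : (0:ℝ) ≤ 1)]
  rw [intervalIntegral.integral_const_mul]
  congr 1
  have hI1 : IntervalIntegrable (fun x => Phi b (x+b)) volume 0 1 :=
    Continuous.intervalIntegrable (by exact (Phi_cont b).comp (by continuity)) 0 1
  have hI2 : IntervalIntegrable (fun x => Phi b (x-b)) volume 0 1 :=
    Continuous.intervalIntegrable (by exact (Phi_cont b).comp (by continuity)) 0 1
  rw [intervalIntegral.integral_sub hI1 hI2]
  congr 1
  · rw [intervalIntegral.integral_comp_add_right (Phi b) b, zero_add]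
  · have h : ∀ x : ℝ, x - b = x + (-b) := fun x => by ring
    simp only [h]
    rw [intervalIntegral.integral_comp_add_right (Phi b) (-b), zero_add]

lemma eval_piece {f P p : ℝ → ℝ} {a c : ℝ} (hac : a ≤ c)
    (hfp : ∀ u ∈ Set.Icc a c, f u = p u) (hp : Continuous p)
    (hP : ∀ x, HasDerivAt P (p x) x) :
    ∫ u in a..c, f u = P c - P a := by
  have he : Set.EqOn f p (Set.uIcc a c) := by rw [Set.uIcc_of_le hac]; exact hfp
  rw [intervalIntegral.integral_congr he]
  exact intervalIntegral.integral_eq_sub_of_hasDerivAt (fun x _ => hP x)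
    (hp.intervalIntegrable a c)

lemma Phi_nonpos {b : ℝ} {v : ℝ} (hv : v ≤ 0) : Phi b v = 0 := by
  unfold Phi
  rw [intervalIntegral.integral_of_ge hv, integral_Ioc_eq_integral_Ioo]
  rw [setIntegral_congr_fun measurableSet_Ioo (g := fun _ => (0:ℝ))
    (fun u hu => by
      simp only [Ffun]
      rw [ind01_of_not_mem (by simp only [Set.mem_Icc, not_and_or]; left; exact not_le.mpr hu.2),
        zero_mul])]
  simp

lemma Ffun_ge_one {b : ℝ} {u : ℝ} (hu : 1 < u) : Ffun b u = 0 := by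
  simp only [Ffun]
  rw [ind01_of_not_mem (by simp only [Set.mem_Icc, not_and_or]; right; exact not_le.mpr hu),
    zero_mul]

lemma Phi_ge_one {b v : ℝ} (hv : 1 ≤ v) : Phi b v = Phi b 1 := by
  unfold Phi
  rw [← intervalIntegral.integral_add_adjacent_intervals (Ffun_intIntegrable b 0 1)
    (Ffun_intIntegrable b 1 v)]
  have : (∫ u in (1:ℝ)..v, Ffun b u) = 0 := by
    rw [intervalIntegral.integral_of_le hv, integral_Ioc_eq_integral_Ioo,
      setIntegral_congr_fun measurableSet_Ioo (g := fun _ => (0:ℝ))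
        (fun u hu => Ffun_ge_one hu.1)]
    simp
  rw [this, add_zero]

lemma hd_cubic (a0 a1 a2 a3 x : ℝ) :
    HasDerivAt (fun v => a0 + a1*v + a2*v^2 + a3*v^3) (a1 + 2*a2*x + 3*a3*x^2) x := by
  have h := (((hasDerivAt_const x a0).add ((hasDerivAt_id x).const_mul a1)).add
    ((hasDerivAt_pow 2 x).const_mul a2)).add ((hasDerivAt_pow 3 x).const_mul a3)
  exact h.congr_deriv (by norm_num; ring)

lemma mainReduce {b : ℝ} (hb : 0 < b) :
    (∫ x in Set.Icc (0:ℝ) 1, ∫ y in Set.Icc (-1:ℝ) 1, ∫ z in Set.Icc (-1:ℝ) 1,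
      ind01 (x + b*y) * ind01 (x + b*y + b*z) * ind01 (x + b*y))
      = b⁻¹ * ((∫ v in b..(1+b:ℝ), Phi b v) - (∫ v in (-b)..(1-b:ℝ), Phi b v)) := by
  rw [← outerC hb]
  apply setIntegral_congr_fun measurableSet_Icc
  intro x _
  dsimp only
  rw [← middleB hb x]
  apply setIntegral_congr_fun measurableSet_Icc
  intro y _
  dsimp only
  exact innerA hb (x + b*y)

lemma case1 {b : ℝ} (hb : 0 < b) (hb2 : b ≤ 1/2) :
    b⁻¹ * ((∫ v in b..(1+b:ℝ), Phi b v) - (∫ v in (-b)..(1-b:ℝ), Phi b v))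
      = 2/3*(6-5*b) := by
  have hbne : b ≠ 0 := hb.ne'
  -- F formulas
  have hF1 : ∀ u ∈ Set.Icc (0:ℝ) b, Ffun b u = 1 + u/b := by
    intro u hu
    rw [Ffun, ind01_of_mem ⟨hu.1, by linarith [hu.2]⟩, one_mul, gfun,
      min_eq_left (by rw [le_div_iff₀ hb]; linarith [hu.2]),
      min_eq_right (by rw [div_le_one hb]; linarith [hu.2])]
  have hF2 : ∀ u ∈ Set.Icc b (1-b), Ffun b u = 2 := by
    intro u hu
    rw [Ffun, ind01_of_mem ⟨by linarith [hu.1], by linarith [hu.2]⟩, one_mul, gfun,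
      min_eq_left (by rw [le_div_iff₀ hb]; linarith [hu.2]),
      min_eq_left (by rw [le_div_iff₀ hb]; linarith [hu.1])]
    norm_num
  have hF3 : ∀ u ∈ Set.Icc (1-b) 1, Ffun b u = 1 + (1-u)/b := by
    intro u hu
    rw [Ffun, ind01_of_mem ⟨by linarith [hu.1], hu.2⟩, one_mul, gfun,
      min_eq_right (by rw [div_le_one hb]; linarith [hu.1]),
      min_eq_left (by rw [le_div_iff₀ hb]; linarith [hu.1])]
    ring
  -- Phi formulas
  have hQ1 : ∀ v ∈ Set.Icc (0:ℝ) b, Phi b v = v + v^2/(2*b) := by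
    intro v hv
    have h := eval_piece (f := Ffun b) (P := fun t => 0 + 1*t + (1/(2*b))*t^2 + 0*t^3)
      (p := fun u => 1 + 2*(1/(2*b))*u + 3*0*u^2) hv.1
      (fun u hu => by rw [hF1 u ⟨hu.1, hu.2.trans hv.2⟩]; field_simp; try ring)
      (by fun_prop) (fun x => hd_cubic 0 1 (1/(2*b)) 0 x)
    rw [Phi, h]; field_simp; try ring
  have hQ2 : ∀ v ∈ Set.Icc b (1-b), Phi b v = 2*v - b/2 := by
    intro v hv
    rw [Phi, ← intervalIntegral.integral_add_adjacent_intervals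
      (Ffun_intIntegrable b 0 b) (Ffun_intIntegrable b b v)]
    have e1 : (∫ u in (0:ℝ)..b, Ffun b u) = b + b^2/(2*b) := hQ1 b ⟨hb.le, le_refl b⟩
    have e2 : (∫ u in b..v, Ffun b u) = 2*v - 2*b := by
      rw [eval_piece (P := fun t => 0 + 2*t + 0*t^2 + 0*t^3)
        (p := fun u => 2 + 2*0*u + 3*0*u^2) hv.1
        (fun u hu => by rw [hF2 u ⟨hu.1, hu.2.trans hv.2⟩]; ring)
        (by fun_prop) (fun x => hd_cubic 0 2 0 0 x)]
      ring
    rw [e1, e2]; field_simp; ring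
  have hQ3 : ∀ v ∈ Set.Icc (1-b) 1, Phi b v = 1 + v - b - (1-v)^2/(2*b) := by
    intro v hv
    rw [Phi, ← intervalIntegral.integral_add_adjacent_intervals
      (Ffun_intIntegrable b 0 (1-b)) (Ffun_intIntegrable b (1-b) v)]
    have e1 : (∫ u in (0:ℝ)..(1-b), Ffun b u) = 2*(1-b) - b/2 :=
      hQ2 (1-b) ⟨by linarith, le_refl _⟩
    have e2 : (∫ u in (1-b)..v, Ffun b u)
        = ((1+1/b)*v + (-(1/(2*b)))*v^2) - ((1+1/b)*(1-b) + (-(1/(2*b)))*(1-b)^2) := by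
      rw [eval_piece (P := fun t => 0 + (1+1/b)*t + (-(1/(2*b)))*t^2 + 0*t^3)
        (p := fun u => (1+1/b) + 2*(-(1/(2*b)))*u + 3*0*u^2) hv.1
        (fun u hu => by rw [hF3 u ⟨hu.1, hu.2.trans hv.2⟩]; field_simp; ring)
        (by fun_prop) (fun x => hd_cubic 0 (1+1/b) (-(1/(2*b))) 0 x)]
      ring
    rw [e1, e2]; field_simp; ring
  have hPhi1 : Phi b 1 = 2 - b := by
    rw [hQ3 1 ⟨by linarith, le_refl _⟩]; field_simp; ring
  -- integrals of Phi
  have hPint : ∀ a c : ℝ, IntervalIntegrable (Phi b) volume a c :=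
    fun a c => (Phi_cont b).intervalIntegrable a c
  have pA : (∫ v in (-b)..(0:ℝ), Phi b v) = 0 := by
    rw [eval_piece (P := fun _ => (0:ℝ)) (p := fun _ => (0:ℝ)) (by linarith)
      (fun v hv => Phi_nonpos hv.2) continuous_const (fun x => hasDerivAt_const x 0)]
    ring
  have pB : (∫ v in (0:ℝ)..b, Phi b v) = 2*b^2/3 := by
    rw [eval_piece (P := fun t => 0 + 0*t + (1/2)*t^2 + (1/(6*b))*t^3)
      (p := fun u => 0 + 2*(1/2)*u + 3*(1/(6*b))*u^2) hb.le
      (fun v hv => by rw [hQ1 v hv]; field_simp; ring)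
      (by fun_prop) (fun x => hd_cubic 0 0 (1/2) (1/(6*b)) x)]
    field_simp; ring
  have pC : (∫ v in b..(1-b:ℝ), Phi b v) = 1 - 5*b/2 + b^2 := by
    rw [eval_piece (P := fun t => 0 + (-(b/2))*t + 1*t^2 + 0*t^3)
      (p := fun u => (-(b/2)) + 2*1*u + 3*0*u^2) (by linarith)
      (fun v hv => by rw [hQ2 v hv]; ring)
      (by fun_prop) (fun x => hd_cubic 0 (-(b/2)) 1 0 x)]
    ring
  have pD : (∫ v in (1-b)..(1:ℝ), Phi b v) = 2*b - 5*b^2/3 := by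
    rw [eval_piece
      (P := fun t => 0 + (1-b-1/(2*b))*t + ((1+1/b)/2)*t^2 + (-(1/(6*b)))*t^3)
      (p := fun u => (1-b-1/(2*b)) + 2*((1+1/b)/2)*u + 3*(-(1/(6*b)))*u^2) (by linarith)
      (fun v hv => by rw [hQ3 v hv]; field_simp; ring)
      (by fun_prop)
      (fun x => hd_cubic 0 (1-b-1/(2*b)) ((1+1/b)/2) (-(1/(6*b))) x)]
    field_simp; ring
  have pE : (∫ v in (1:ℝ)..(1+b), Phi b v) = (2-b)*b := by
    rw [eval_piece (P := fun t => 0 + (2-b)*t + 0*t^2 + 0*t^3)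
      (p := fun u => (2-b) + 2*0*u + 3*0*u^2) (by linarith)
      (fun v hv => by rw [Phi_ge_one hv.1, hPhi1]; ring)
      (by fun_prop) (fun x => hd_cubic 0 (2-b) 0 0 x)]
    ring
  have s1 : (∫ v in b..(1+b:ℝ), Phi b v) = (1 - 5*b/2 + b^2) + (2*b - 5*b^2/3) + (2-b)*b := by
    rw [← intervalIntegral.integral_add_adjacent_intervals (hPint b 1) (hPint 1 (1+b)),
      ← intervalIntegral.integral_add_adjacent_intervals (hPint b (1-b)) (hPint (1-b) 1),
      pC, pD, pE]
  have s2 : (∫ v in (-b)..(1-b:ℝ), Phi b v) = 0 + 2*b^2/3 + (1 - 5*b/2 + b^2) := by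
    rw [← intervalIntegral.integral_add_adjacent_intervals (hPint (-b) b) (hPint b (1-b)),
      ← intervalIntegral.integral_add_adjacent_intervals (hPint (-b) 0) (hPint 0 b),
      pA, pB, pC]
  rw [s1, s2]
  field_simp
  ring

lemma case2 {b : ℝ} (hb : 1/2 < b) (hb2 : b ≤ 1) :
    b⁻¹ * ((∫ v in b..(1+b:ℝ), Phi b v) - (∫ v in (-b)..(1-b:ℝ), Phi b v))
      = (-1 + 6*b - 2*b^3)/(3*b^2) := by
  have hb0 : (0:ℝ) < b := by linarith
  have hbne : b ≠ 0 := hb0.ne'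
  -- F formulas
  have hF1 : ∀ u ∈ Set.Icc (0:ℝ) (1-b), Ffun b u = 1 + u/b := by
    intro u hu
    rw [Ffun, ind01_of_mem ⟨hu.1, by linarith [hu.2]⟩, one_mul, gfun,
      min_eq_left (by rw [le_div_iff₀ hb0]; linarith [hu.2]),
      min_eq_right (by rw [div_le_one hb0]; linarith [hu.2])]
  have hF2 : ∀ u ∈ Set.Icc (1-b) b, Ffun b u = 1/b := by
    intro u hu
    rw [Ffun, ind01_of_mem ⟨by linarith [hu.1], by linarith [hu.2]⟩, one_mul, gfun,
      min_eq_right (by rw [div_le_one hb0]; linarith [hu.1]),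
      min_eq_right (by rw [div_le_one hb0]; linarith [hu.2])]
    field_simp
    ring
  have hF3 : ∀ u ∈ Set.Icc b (1:ℝ), Ffun b u = 1 + (1-u)/b := by
    intro u hu
    rw [Ffun, ind01_of_mem ⟨by linarith [hu.1], hu.2⟩, one_mul, gfun,
      min_eq_right (by rw [div_le_one hb0]; linarith [hu.1]),
      min_eq_left (by rw [le_div_iff₀ hb0]; linarith [hu.1])]
    ring
  -- Phi formulas
  have hQ1 : ∀ v ∈ Set.Icc (0:ℝ) (1-b), Phi b v = v + v^2/(2*b) := by
    intro v hv
    have h := eval_piece (f := Ffun b) (P := fun t => 0 + 1*t + (1/(2*b))*t^2 + 0*t^3)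
      (p := fun u => 1 + 2*(1/(2*b))*u + 3*0*u^2) hv.1
      (fun u hu => by rw [hF1 u ⟨hu.1, hu.2.trans hv.2⟩]; field_simp; try ring)
      (by fun_prop) (fun x => hd_cubic 0 1 (1/(2*b)) 0 x)
    rw [Phi, h]; field_simp; try ring
  have hQ2 : ∀ v ∈ Set.Icc (1-b) b,
      Phi b v = (1-b) + (1-b)^2/(2*b) + (v-(1-b))/b := by
    intro v hv
    rw [Phi, ← intervalIntegral.integral_add_adjacent_intervals
      (Ffun_intIntegrable b 0 (1-b)) (Ffun_intIntegrable b (1-b) v)]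
    have e1 : (∫ u in (0:ℝ)..(1-b), Ffun b u) = (1-b) + (1-b)^2/(2*b) :=
      hQ1 (1-b) ⟨by linarith, le_refl _⟩
    have e2 : (∫ u in (1-b)..v, Ffun b u) = ((1/b)*v) - ((1/b)*(1-b)) := by
      rw [eval_piece (P := fun t => 0 + (1/b)*t + 0*t^2 + 0*t^3)
        (p := fun u => (1/b) + 2*0*u + 3*0*u^2) hv.1
        (fun u hu => by rw [hF2 u ⟨hu.1, hu.2.trans hv.2⟩]; ring)
        (by fun_prop) (fun x => hd_cubic 0 (1/b) 0 0 x)]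
      ring
    rw [e1, e2]; field_simp; try ring
  have hQ3 : ∀ v ∈ Set.Icc b (1:ℝ),
      Phi b v = (1-b) + (1-b)^2/(2*b) + (2*b-1)/b + (v-b) + ((1-b)^2-(1-v)^2)/(2*b) := by
    intro v hv
    rw [Phi, ← intervalIntegral.integral_add_adjacent_intervals
      (Ffun_intIntegrable b 0 b) (Ffun_intIntegrable b b v)]
    have e1 : (∫ u in (0:ℝ)..b, Ffun b u)
        = (1-b) + (1-b)^2/(2*b) + (b-(1-b))/b := hQ2 b ⟨by linarith, le_refl _⟩
    have e2 : (∫ u in b..v, Ffun b u)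
        = ((1+1/b)*v + (-(1/(2*b)))*v^2) - ((1+1/b)*b + (-(1/(2*b)))*b^2) := by
      rw [eval_piece (P := fun t => 0 + (1+1/b)*t + (-(1/(2*b)))*t^2 + 0*t^3)
        (p := fun u => (1+1/b) + 2*(-(1/(2*b)))*u + 3*0*u^2) hv.1
        (fun u hu => by rw [hF3 u ⟨hu.1, hu.2.trans hv.2⟩]; field_simp; ring)
        (by fun_prop) (fun x => hd_cubic 0 (1+1/b) (-(1/(2*b))) 0 x)]
      ring
    rw [e1, e2]; field_simp; ring
  have hPhi1 : Phi b 1 = 2*(1-b) + (1-b)^2/b + (2*b-1)/b := by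
    rw [hQ3 1 ⟨hb2, le_refl _⟩]; field_simp; ring
  have hPint : ∀ a c : ℝ, IntervalIntegrable (Phi b) volume a c :=
    fun a c => (Phi_cont b).intervalIntegrable a c
  have pA : (∫ v in (-b)..(0:ℝ), Phi b v) = 0 := by
    rw [eval_piece (P := fun _ => (0:ℝ)) (p := fun _ => (0:ℝ)) (by linarith)
      (fun v hv => Phi_nonpos hv.2) continuous_const (fun x => hasDerivAt_const x 0)]
    ring
  have pB : (∫ v in (0:ℝ)..(1-b), Phi b v) = (1-b)^2/2 + (1-b)^3/(6*b) := by
    rw [eval_piece (P := fun t => 0 + 0*t + (1/2)*t^2 + (1/(6*b))*t^3)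
      (p := fun u => 0 + 2*(1/2)*u + 3*(1/(6*b))*u^2) (by linarith)
      (fun v hv => by rw [hQ1 v hv]; field_simp; ring)
      (by fun_prop) (fun x => hd_cubic 0 0 (1/2) (1/(6*b)) x)]
    field_simp; try ring
  have pD : (∫ v in b..(1:ℝ), Phi b v)
      = ((1-b) + (1-b)^2/(2*b) + (2*b-1)/b)*(1-b) + (1-b)^2/2 + (1-b)^3/(3*b) := by
    rw [eval_piece
      (P := fun t => 0 + ((1-b) + (1-b)^2/b + (2*b-1)/b - b - 1/(2*b))*t
          + ((1+1/b)/2)*t^2 + (-(1/(6*b)))*t^3)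
      (p := fun u => ((1-b) + (1-b)^2/b + (2*b-1)/b - b - 1/(2*b))
          + 2*((1+1/b)/2)*u + 3*(-(1/(6*b)))*u^2) hb2
      (fun v hv => by rw [hQ3 v hv]; field_simp; ring)
      (by fun_prop)
      (fun x => hd_cubic 0 ((1-b) + (1-b)^2/b + (2*b-1)/b - b - 1/(2*b))
        ((1+1/b)/2) (-(1/(6*b))) x)]
    field_simp; ring
  have pE : (∫ v in (1:ℝ)..(1+b), Phi b v) = (2*(1-b) + (1-b)^2/b + (2*b-1)/b)*b := by
    rw [eval_piece (P := fun t => 0 + (2*(1-b) + (1-b)^2/b + (2*b-1)/b)*t + 0*t^2 + 0*t^3)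
      (p := fun u => (2*(1-b) + (1-b)^2/b + (2*b-1)/b) + 2*0*u + 3*0*u^2) (by linarith)
      (fun v hv => by rw [Phi_ge_one hv.1, hPhi1]; ring)
      (by fun_prop) (fun x => hd_cubic 0 (2*(1-b) + (1-b)^2/b + (2*b-1)/b) 0 0 x)]
    ring
  have s1 : (∫ v in b..(1+b:ℝ), Phi b v)
      = (((1-b) + (1-b)^2/(2*b) + (2*b-1)/b)*(1-b) + (1-b)^2/2 + (1-b)^3/(3*b))
        + (2*(1-b) + (1-b)^2/b + (2*b-1)/b)*b := by
    rw [← intervalIntegral.integral_add_adjacent_intervals (hPint b 1) (hPint 1 (1+b)),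
      pD, pE]
  have s2 : (∫ v in (-b)..(1-b:ℝ), Phi b v) = 0 + ((1-b)^2/2 + (1-b)^3/(6*b)) := by
    rw [← intervalIntegral.integral_add_adjacent_intervals (hPint (-b) 0) (hPint 0 (1-b)),
      pA, pB]
  rw [s1, s2]
  field_simp
  ring


/-- For the pair partition `π₂ = {{1,4},{2,3}}`, the integral
`p_{π₂}(b) = ∫_{[0,1]×[-1,1]²} I_{[0,1]}(x₀+bx₁) I_{[0,1]}(x₀+bx₁+bx₂) I_{[0,1]}(x₀+bx₁)`
equals `p_{π₁}(b)`, namely `(2/3)(6-5b)` for `b ∈ [0,1/2]` and `(-1+6b-2b³)/(3b²)`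
for `b ∈ (1/2,1]`. -/
theorem p_pi2_eval (b : ℝ) :
    (b ∈ Set.Icc (0 : ℝ) (1 / 2) →
      (∫ x in Set.Icc (0 : ℝ) 1, ∫ y in Set.Icc (-1 : ℝ) 1, ∫ z in Set.Icc (-1 : ℝ) 1,
        ind01 (x + b * y) * ind01 (x + b * y + b * z) * ind01 (x + b * y))
        = 2 / 3 * (6 - 5 * b)) ∧
    (b ∈ Set.Ioc (1 / 2 : ℝ) 1 →
      (∫ x in Set.Icc (0 : ℝ) 1, ∫ y in Set.Icc (-1 : ℝ) 1, ∫ z in Set.Icc (-1 : ℝ) 1,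
        ind01 (x + b * y) * ind01 (x + b * y + b * z) * ind01 (x + b * y))
        = (-1 + 6 * b - 2 * b ^ 3) / (3 * b ^ 2)) := by
  constructor
  · rintro ⟨hb0, hb2⟩
    rcases eq_or_lt_of_le hb0 with h0 | h0
    · rw [← h0]
      simp only [zero_mul, add_zero]
      have h2 : ∀ c : ℝ, (∫ _ in Set.Icc (-1:ℝ) 1, c) = 2*c := by
        intro c
        rw [setIntegral_const, Real.volume_real_Icc_of_le (by norm_num)]
        rw [show (1:ℝ) - (-1) = 2 by norm_num]
        rw [smul_eq_mul]
      simp only [h2]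
      have h3 : ∀ x ∈ Set.Icc (0:ℝ) 1, 2*(2*(ind01 x * ind01 x * ind01 x)) = 4 := by
        intro x hx; rw [ind01_of_mem hx]; norm_num
      rw [setIntegral_congr_fun measurableSet_Icc h3, setIntegral_const, Real.volume_real_Icc_of_le (by norm_num)]
      rw [show (1:ℝ) - 0 = 1 by norm_num]
      norm_num
    · rw [mainReduce h0, case1 h0 hb2]
  · rintro ⟨hb1, hb2⟩
    have h0 : (0:ℝ) < b := by linarith
    rw [mainReduce h0, case2 hb1 hb2]
end
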